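/- Let L be a set, let S be a finite consequence operator on L, and let P ⊆ L. Define, for each X ⊆ P, P_N(X) = P ∩ S(X). Then P_N is a finite consequence operator on P; that is, for every X ⊆ P: (1) X ⊆ P_N(X) ⊆ P; (2) P_N(P_N(X)) = P_N(X); and (3) P_N(X) = ⋃{P_N(F) : F a finite subset of X}. -/
import Mathlib


/-- A finite consequence operator on a set (type) `L`. -/
def IsFiniteConsequenceOperator {L : Type*} (C : Set L → Set L) : Prop :=
  (∀ X : Set L, X ⊆ C X) ∧
  (∀ X : Set L, C (C X) = C X) ∧
  (∀ X : Set L, C X = ⋃ F ∈ {F : Set L | F ⊆ X ∧ F.Finite}, C F)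

lemma fco_mono {L : Type*} {S : Set L → Set L} (hS : IsFiniteConsequenceOperator S)
    {X Y : Set L} (h : X ⊆ Y) : S X ⊆ S Y := by
  rw [hS.2.2 X]
  refine Set.iUnion₂_subset fun F hF => ?_
  rw [hS.2.2 Y]
  exact Set.subset_biUnion_of_mem (u := S) ⟨hF.1.trans h, hF.2⟩

/-- If `S` is a finite consequence operator on `L` and `P ⊆ L`, then
`P_N(X) = P ∩ S(X)` is a finite consequence operator on `P`: for every `X ⊆ P`,
(1) `X ⊆ P_N(X) ⊆ P`; (2) `P_N(P_N(X)) = P_N(X)`;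
(3) `P_N(X) = ⋃ {P_N(F) : F a finite subset of X}`. -/
theorem stmt6 {L : Type*} (S : Set L → Set L)
    (hS : IsFiniteConsequenceOperator S) (P : Set L) :
    ∀ X : Set L, X ⊆ P →
      (X ⊆ P ∩ S X ∧ P ∩ S X ⊆ P) ∧
      (P ∩ S (P ∩ S X) = P ∩ S X) ∧
      (P ∩ S X = ⋃ F ∈ {F : Set L | F ⊆ X ∧ F.Finite}, P ∩ S F) := by
  obtain ⟨hext, hidem, hfin⟩ := hS
  intro X hXP
  refine ⟨⟨Set.subset_inter hXP (hext X), Set.inter_subset_left⟩, ?_, ?_⟩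
  · have h1 : S (P ∩ S X) ⊆ S X := by
      have := fco_mono ⟨hext, hidem, hfin⟩ (Set.inter_subset_right (s := P) (t := S X))
      rw [hidem X] at this
      exact this
    have h2 : S X ⊆ S (P ∩ S X) :=
      fco_mono ⟨hext, hidem, hfin⟩ (Set.subset_inter hXP (hext X))
    rw [Set.Subset.antisymm h1 h2]
  · rw [hfin X, Set.inter_iUnion₂]
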